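/- Let ω be an integrable homogeneous 1-form of degree e with i_Rω = 0, and let a ≠ e be a positive integer. A homogeneous 1-form η of degree a with decomposition η = η_r − dh (h = −(1/a)i_Rη, η_r = (1/a)i_R dη) satisfies dω ∧ η = 0 if and only if a·h·dω = e·ω ∧ (η_r − dh). -/

import Mathlib

open MvPolynomial Finset

noncomputable section

/-- An `r`-form on `ℂ^m` with polynomial coefficients, represented by its
(intendedly alternating) coefficient function `(i₁,…,i_r) ↦ τ_{i₁…i_r}`. -/
abbrev Form (m r : ℕ) : Type := (Fin r → Fin m) → MvPolynomial (Fin m) ℂ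

/-- The coefficient function is alternating. -/
def IsAlt {m r : ℕ} (τ : Form m r) : Prop :=
  ∀ (f : Fin r → Fin m) (σ : Equiv.Perm (Fin r)),
    τ (f ∘ σ) = ((Equiv.Perm.sign σ : ℤˣ) : ℤ) • τ f

/-- `τ` is a homogeneous `r`-form of total degree `p` (each `xᵢ` and each `dxᵢ`
has degree `1`, so the polynomial coefficients are homogeneous of degree `p - r`). -/
def IsHomog {m : ℕ} (r p : ℕ) (τ : Form m r) : Prop :=
  ∀ f, (τ f).IsHomogeneous (p - r)

/-- Wedge product of forms (antisymmetrized product). -/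
def wedge {m r s : ℕ} (τ : Form m r) (σ : Form m s) : Form m (r + s) :=
  fun f => (((r.factorial * s.factorial : ℕ) : ℂ))⁻¹ •
    ∑ π : Equiv.Perm (Fin (r + s)),
      ((Equiv.Perm.sign π : ℤˣ) : ℤ) •
        (τ (fun i => f (π (Fin.castAdd s i))) * σ (fun j => f (π (Fin.natAdd r j))))

/-- Exterior derivative. -/
def extd {m r : ℕ} (τ : Form m r) : Form m (r + 1) :=
  fun f => ∑ i : Fin (r + 1),
    (-1 : ℤ) ^ (i : ℕ) • MvPolynomial.pderiv (f i) (τ (f ∘ i.succAbove))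

/-- Contraction (interior product) with the radial vector field `R = Σ xᵢ ∂/∂xᵢ`. -/
def ctr {m r : ℕ} (τ : Form m (r + 1)) : Form m r :=
  fun f => ∑ j : Fin m, MvPolynomial.X j * τ (Fin.cons j f)

/-- Contraction with a polynomial vector field `X = Σ Xᵢ ∂/∂xᵢ`. -/
def ctrX {m r : ℕ} (X : Fin m → MvPolynomial (Fin m) ℂ) (τ : Form m (r + 1)) : Form m r :=
  fun f => ∑ j : Fin m, X j * τ (Fin.cons j f)

/-- A polynomial regarded as a `0`-form. -/
def const {m : ℕ} (h : MvPolynomial (Fin m) ℂ) : Form m 0 := fun _ => h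

/-- Reindexing a form along an equality of ranks. -/
def castF {m r s : ℕ} (h : r = s) (τ : Form m r) : Form m s :=
  fun f => τ (f ∘ Fin.cast h)

/-- `d (i_R τ)`, defined for forms of any rank (it is `0` on `0`-forms). -/
def dIR {m : ℕ} : {r : ℕ} → Form m r → Form m r
  | 0, _ => 0
  | _ + 1, τ => extd (ctr τ)

/-- `i_R (d τ)`, defined for forms of any rank. -/
def iRd {m r : ℕ} (τ : Form m r) : Form m r := ctr (extd τ)

/-- The operator `ω △ τ := ω ∧ dτ + κ · dω ∧ τ`. -/
def triangle {m : ℕ} (ω : Form m 1) (κ : ℂ) {r : ℕ} (τ : Form m r) : Form m (r + 2) :=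
  castF (by omega) (wedge ω (extd τ)) + κ • castF (by omega) (wedge (extd ω) τ)

end

/-!
Contraction with the radial field `R` is an antiderivation, and on `1`-forms of degree `p`
Cartan's formula reads `i_R d + d i_R = p`. The latter gives `η = η_r - dh` and `i_R dω = e ω`,
so the former turns `i_R (dω ∧ η)` into `(i_R η) dω + e ω ∧ η`: the unfolding equation says
exactly that `i_R (dω ∧ η) = 0`. Conversely, since `η ∧ η = 0`, contracting `η ∧ dω ∧ η = 0`
gives `(i_R η) (dω ∧ η) = η ∧ i_R (dω ∧ η) = 0`. If `i_R η = 0`, the unfolding equation reduces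
to `ω ∧ η = 0` instead, so `ω_l η = η_l ω` and `ω_l (dω ∧ η) = η_l (dω ∧ ω) = 0` for every
coefficient `ω_l` of `ω`, by integrability.
-/
open MvPolynomial

section

variable {m : ℕ}

lemma sum_perm_fin_succ {M : Type*} [AddCommMonoid M] {n : ℕ}
    (g : Equiv.Perm (Fin (n + 1)) → M) :
    ∑ π, g π = ∑ p, ∑ σ : Equiv.Perm (Fin n), g (Equiv.Perm.decomposeFin.symm (p, σ)) := by
  rw [← Equiv.sum_comp Equiv.Perm.decomposeFin.symm, Fintype.sum_prod_type]

lemma decomposeFin_symm_apply_two {n : ℕ} (σ : Equiv.Perm (Fin (n + 2))) (p : Fin (n + 3)) :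
    Equiv.Perm.decomposeFin.symm (p, σ) 2 = Equiv.swap 0 p (σ 1).succ :=
  Equiv.Perm.decomposeFin_symm_apply_succ σ p 1

def coeff1 (t : Form m 1) (i : Fin m) : MvPolynomial (Fin m) ℂ := t ![i]

def coeff2 (τ : Form m 2) (i j : Fin m) : MvPolynomial (Fin m) ℂ := τ ![i, j]

lemma apply_eq_coeff0 (c : Form m 0) (f : Fin 0 → Fin m) : c f = c ![] := by
  rw [Subsingleton.elim f ![]]

lemma apply_eq_coeff1 (t : Form m 1) (f : Fin 1 → Fin m) : t f = coeff1 t (f 0) := by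
  rw [coeff1]; congr 1; ext i; fin_cases i; rfl

lemma apply_eq_coeff2 (τ : Form m 2) (f : Fin 2 → Fin m) : τ f = coeff2 τ (f 0) (f 1) := by
  rw [coeff2]; congr 1; ext i; fin_cases i <;> rfl

lemma form1_ext {t s : Form m 1} (h : ∀ i, coeff1 t i = coeff1 s i) : t = s := by
  funext f; rw [apply_eq_coeff1 t, apply_eq_coeff1 s, h]

lemma form2_ext {τ σ : Form m 2} (h : ∀ i j, coeff2 τ i j = coeff2 σ i j) : τ = σ := by
  funext f; rw [apply_eq_coeff2 τ, apply_eq_coeff2 σ, h]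

lemma coeff2_add (τ σ : Form m 2) (i j : Fin m) :
    coeff2 (τ + σ) i j = coeff2 τ i j + coeff2 σ i j := rfl

lemma IsAlt.coeff2_swap {τ : Form m 2} (hτ : IsAlt τ) (i j : Fin m) :
    coeff2 τ j i = -coeff2 τ i j := by
  have h := hτ ![i, j] (Equiv.swap 0 1)
  rw [show ![i, j] ∘ Equiv.swap 0 1 = ![j, i] by ext k; fin_cases k <;> rfl,
    Equiv.Perm.sign_swap (by decide)] at h
  simpa [coeff2] using h

lemma extd_zero_apply (c : Form m 0) (f : Fin 1 → Fin m) : extd c f = pderiv (f 0) (c ![]) := by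
  simp [extd, apply_eq_coeff0 c (f ∘ _)]

lemma coeff2_extd (w : Form m 1) (i j : Fin m) :
    coeff2 (extd w) i j = pderiv i (coeff1 w j) - pderiv j (coeff1 w i) := by
  simp [coeff2, extd, apply_eq_coeff1 w, sub_eq_add_neg]

lemma isAlt_extd (w : Form m 1) : IsAlt (extd w) := by
  intro f σ
  obtain rfl | rfl : σ = 1 ∨ σ = Equiv.swap 0 1 := by revert σ; decide
  · simp
  · rw [apply_eq_coeff2 (extd w), apply_eq_coeff2 (extd w) f, Equiv.Perm.sign_swap (by decide)]
    simp [coeff2_extd]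

lemma ctr_one_apply (t : Form m 1) (f : Fin 0 → Fin m) : ctr t f = ∑ j, X j * coeff1 t j := by
  simp [ctr, apply_eq_coeff1 t]

lemma coeff1_ctr (τ : Form m 2) (i : Fin m) : coeff1 (ctr τ) i = ∑ j, X j * coeff2 τ j i := by
  simp [ctr, coeff1, apply_eq_coeff2 τ]

lemma coeff2_ctr (θ : Form m 3) (i j : Fin m) :
    coeff2 (ctr θ) i j = ∑ l, X l * θ ![l, i, j] :=
  rfl

lemma coeff2_wedge_one_one (t s : Form m 1) (i j : Fin m) :
    coeff2 (wedge t s) i j = coeff1 t i * coeff1 s j - coeff1 t j * coeff1 s i := by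
  simp [coeff2, wedge, sum_perm_fin_succ, Fin.sum_univ_succ, apply_eq_coeff1 t, apply_eq_coeff1 s,
    sub_eq_add_neg]

lemma coeff2_wedge_zero_two (c : Form m 0) {τ : Form m 2} (hτ : IsAlt τ) (i j : Fin m) :
    coeff2 (wedge c τ) i j = c ![] * coeff2 τ i j := by
  rw [show c = fun _ => c ![] from funext (apply_eq_coeff0 c), coeff2]
  simp [wedge, sum_perm_fin_succ, Fin.sum_univ_succ, apply_eq_coeff2 τ, hτ.coeff2_swap j i]
  module

lemma wedge_two_one_apply {τ : Form m 2} (hτ : IsAlt τ) (t : Form m 1) (f : Fin 3 → Fin m) :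
    wedge τ t f = coeff2 τ (f 0) (f 1) * coeff1 t (f 2) + coeff2 τ (f 1) (f 2) * coeff1 t (f 0)
      + coeff2 τ (f 2) (f 0) * coeff1 t (f 1) := by
  simp [wedge, sum_perm_fin_succ, Fin.sum_univ_succ, apply_eq_coeff2 τ, apply_eq_coeff1 t,
    decomposeFin_symm_apply_two, Equiv.swap_apply_of_ne_of_ne, hτ.coeff2_swap (f 1) (f 0),
    hτ.coeff2_swap (f 2) (f 1), hτ.coeff2_swap (f 0) (f 2)]
  module

lemma wedge_one_two_apply (t : Form m 1) {τ : Form m 2} (hτ : IsAlt τ) (f : Fin 3 → Fin m) :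
    wedge t τ f = coeff1 t (f 0) * coeff2 τ (f 1) (f 2) + coeff1 t (f 1) * coeff2 τ (f 2) (f 0)
      + coeff1 t (f 2) * coeff2 τ (f 0) (f 1) := by
  simp [wedge, sum_perm_fin_succ, Fin.sum_univ_succ, apply_eq_coeff2 τ, apply_eq_coeff1 t,
    decomposeFin_symm_apply_two, Equiv.swap_apply_of_ne_of_ne, hτ.coeff2_swap (f 1) (f 0),
    hτ.coeff2_swap (f 2) (f 1), hτ.coeff2_swap (f 0) (f 2)]
  module

lemma wedge_smul_left {r s : ℕ} (c : ℂ) (τ : Form m r) (σ : Form m s) :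
    wedge (c • τ) σ = c • wedge τ σ := by
  funext f
  simp only [wedge, Pi.smul_apply, smul_mul_assoc, Finset.smul_sum, smul_comm c]

lemma extd_smul {r : ℕ} (c : ℂ) (τ : Form m r) : extd (c • τ) = c • extd τ := by
  funext f
  simp only [extd, Pi.smul_apply, Derivation.map_smul, Finset.smul_sum, smul_comm c]

lemma extd_zero {r : ℕ} : extd (0 : Form m r) = 0 := by
  funext f
  simp [extd]

lemma ctr_zero {r : ℕ} : ctr (0 : Form m (r + 1)) = 0 := by
  funext f
  simp [ctr]

lemma pderiv_sum_X_mul (w : Fin m → MvPolynomial (Fin m) ℂ) (j : Fin m) :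
    pderiv j (∑ i, X i * w i) = w j + ∑ i, X i * pderiv j (w i) := by
  classical
  simp [Derivation.leibniz, pderiv_X, Pi.single_apply, Finset.sum_add_distrib, add_comm]

lemma ctr_extd_add_extd_ctr {p : ℕ} (hp : 0 < p) {τ : Form m 1} (hτ : IsHomog 1 p τ) :
    ctr (extd τ) + extd (ctr τ) = (p : ℂ) • τ := by
  refine form1_ext fun i => ?_
  have euler : ∑ j, X j * pderiv j (coeff1 τ i) = (p - 1) • coeff1 τ i :=
    (hτ ![i]).sum_X_mul_pderiv
  calc coeff1 (ctr (extd τ) + extd (ctr τ)) i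
      = ∑ j, X j * (pderiv j (coeff1 τ i) - pderiv i (coeff1 τ j))
          + pderiv i (∑ j, X j * coeff1 τ j) := by
        change coeff1 (ctr (extd τ)) i + extd (ctr τ) ![i] = _
        rw [coeff1_ctr, extd_zero_apply, ctr_one_apply]
        simp [coeff2_extd]
    _ = (p - 1) • coeff1 τ i + coeff1 τ i := by
        rw [pderiv_sum_X_mul, ← euler]
        simp only [mul_sub, Finset.sum_sub_distrib]
        ring
    _ = coeff1 ((p : ℂ) • τ) i := by
        rw [← succ_nsmul, Nat.sub_add_cancel hp, ← Nat.cast_smul_eq_nsmul ℂ]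
        rfl

lemma ctr_extd_of_ctr_eq_zero {p : ℕ} (hp : 0 < p) {τ : Form m 1} (hτ : IsHomog 1 p τ)
    (hR : ctr τ = 0) : ctr (extd τ) = (p : ℂ) • τ := by
  rw [← ctr_extd_add_extd_ctr hp hτ, hR, extd_zero, add_zero]

lemma inv_smul_ctr_extd_sub_extd {p : ℕ} (hp : 0 < p) {τ : Form m 1} (hτ : IsHomog 1 p τ) :
    (p : ℂ)⁻¹ • ctr (extd τ) - extd (-(p : ℂ)⁻¹ • ctr τ) = τ := by
  have hp' : (p : ℂ) ≠ 0 := Nat.cast_ne_zero.mpr hp.ne'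
  rw [extd_smul, neg_smul, sub_neg_eq_add, ← smul_add, ctr_extd_add_extd_ctr hp hτ,
    inv_smul_smul₀ hp']

lemma ctr_wedge_two_one {τ : Form m 2} (hτ : IsAlt τ) (t : Form m 1) :
    ctr (wedge τ t) = (wedge (ctr τ) t + wedge (ctr t) τ : Form m 2) := by
  refine form2_ext fun i j => ?_
  rw [coeff2_add, coeff2_ctr, coeff2_wedge_one_one, coeff2_wedge_zero_two _ hτ, coeff1_ctr,
    coeff1_ctr, ctr_one_apply, Finset.sum_mul, Finset.sum_mul, Finset.sum_mul,
    ← Finset.sum_sub_distrib, ← Finset.sum_add_distrib]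
  refine Finset.sum_congr rfl fun l _ => ?_
  simp only [wedge_two_one_apply hτ, Matrix.cons_val_zero, Matrix.cons_val_one, Matrix.cons_val,
    hτ.coeff2_swap l j]
  ring

lemma ctr_mul_wedge_two_one_apply {τ : Form m 2} (hτ : IsAlt τ) (t : Form m 1)
    (f : Fin 3 → Fin m) :
    ctr t ![] * wedge τ t f = coeff1 t (f 0) * coeff2 (ctr (wedge τ t)) (f 1) (f 2)
      + coeff1 t (f 1) * coeff2 (ctr (wedge τ t)) (f 2) (f 0)
      + coeff1 t (f 2) * coeff2 (ctr (wedge τ t)) (f 0) (f 1) := by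
  rw [ctr_wedge_two_one hτ, coeff2_add, coeff2_add, coeff2_add]
  simp only [coeff2_wedge_one_one, coeff2_wedge_zero_two _ hτ, wedge_two_one_apply hτ]
  ring

lemma wedge_extd_eq_zero_of_wedge_eq_zero {ω η : Form m 1} (hint : wedge ω (extd ω) = 0)
    (h : wedge ω η = 0) : wedge (extd ω) η = 0 := by
  by_cases hω : ω = 0
  · rw [hω, extd_zero]
    funext f
    simp [wedge]
  obtain ⟨l, hl⟩ : ∃ l, coeff1 ω l ≠ 0 := by
    by_contra! hzero
    exact hω (form1_ext fun i => hzero i)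
  have hprop : ∀ i j, coeff1 ω i * coeff1 η j = coeff1 ω j * coeff1 η i := fun i j => by
    have h_ij : coeff2 (wedge ω η) i j = 0 := congrFun h ![i, j]
    rwa [coeff2_wedge_one_one, sub_eq_zero] at h_ij
  funext f
  have hint_f : wedge ω (extd ω) f = 0 := congrFun hint f
  rw [wedge_one_two_apply _ (isAlt_extd ω)] at hint_f
  refine (mul_eq_zero.mp ?_).resolve_left hl
  rw [wedge_two_one_apply (isAlt_extd ω)]
  linear_combination coeff2 (extd ω) (f 0) (f 1) * hprop l (f 2)
    + coeff2 (extd ω) (f 1) (f 2) * hprop l (f 0) + coeff2 (extd ω) (f 2) (f 0) * hprop l (f 1)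
    + coeff1 η l * hint_f

lemma wedge_extd_eq_zero_of_ctr_eq_zero {c : ℂ} (hc : c ≠ 0) {ω : Form m 1}
    (hint : wedge ω (extd ω) = 0) (hdω : ctr (extd ω) = c • ω) {η : Form m 1}
    (h : ctr (wedge (extd ω) η) = 0) : wedge (extd ω) η = 0 := by
  by_cases hH : ctr η ![] = 0
  · refine wedge_extd_eq_zero_of_wedge_eq_zero hint (form2_ext fun i j => ?_)
    have h_ij : coeff2 (ctr (wedge (extd ω) η)) i j = 0 := by rw [h]; rfl
    rw [ctr_wedge_two_one (isAlt_extd ω), coeff2_add, coeff2_wedge_zero_two _ (isAlt_extd ω), hH,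
      zero_mul, add_zero, hdω, wedge_smul_left] at h_ij
    exact (smul_eq_zero.mp h_ij).resolve_left hc
  funext f
  have key := ctr_mul_wedge_two_one_apply (isAlt_extd ω) η f
  simp only [h, coeff2, Pi.zero_apply, mul_zero, add_zero] at key
  exact (mul_eq_zero.mp key).resolve_left hH

end

theorem cycle_iff_unfolding_general {m a e : ℕ} (he : 1 ≤ e) (ha : 0 < a)
    (ω : Form m 1) (hω : IsHomog 1 e ω) (hR : ctr ω = 0)
    (hint : wedge ω (extd ω) = 0)
    (η : Form m 1) (hη : IsHomog 1 a η) :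
    wedge (extd ω) η = 0 ↔
      (a : ℂ) • wedge (-((a : ℂ))⁻¹ • ctr η) (extd ω) =
        (e : ℂ) • wedge ω
          (((a : ℂ))⁻¹ • ctr (extd η) - extd (-((a : ℂ))⁻¹ • ctr η)) := by
  have hdω : ctr (extd ω) = (e : ℂ) • ω := ctr_extd_of_ctr_eq_zero he hω hR
  have hunfold : (a : ℂ) • wedge (-((a : ℂ))⁻¹ • ctr η) (extd ω) = -wedge (ctr η) (extd ω) := by
    rw [wedge_smul_left, smul_smul, mul_neg, mul_inv_cancel₀ (Nat.cast_ne_zero.mpr ha.ne'),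
      neg_one_smul]
  have hctr : ctr (wedge (extd ω) η) = wedge (ctr η) (extd ω) + (e : ℂ) • wedge ω η := by
    rw [ctr_wedge_two_one (isAlt_extd ω), hdω, wedge_smul_left]
    exact add_comm _ _
  rw [inv_smul_ctr_extd_sub_extd ha hη, hunfold, neg_eq_iff_add_eq_zero]
  refine ⟨fun h => ?_, fun h => wedge_extd_eq_zero_of_ctr_eq_zero
    (Nat.cast_ne_zero.mpr (by omega)) hint hdω (hctr.trans h)⟩
  rw [← hctr, h, ctr_zero]

/-- for a homogeneous 1-form `η` of degree `a` with decomposition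
`η = η_r − dh` (`h = −(1/a)i_R η`, `η_r = (1/a)i_R dη`), one has `dω∧η = 0`
iff the unfolding equation `a·h·dω = e·ω∧(η_r − dh)` holds. -/
theorem cycle_iff_unfolding {m a e : ℕ} (he : 1 ≤ e) (ha : 0 < a) (hane : a ≠ e)
    (ω : Form m 1) (hω : IsHomog 1 e ω) (hR : ctr ω = 0)
    (hint : wedge ω (extd ω) = 0) (hωne : ω ≠ 0)
    (η : Form m 1) (hη : IsHomog 1 a η) :
    wedge (extd ω) η = 0 ↔
      (a : ℂ) • wedge (-((a : ℂ))⁻¹ • ctr η) (extd ω) =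
        (e : ℂ) • wedge ω
          (((a : ℂ))⁻¹ • ctr (extd η) - extd (-((a : ℂ))⁻¹ • ctr η)) :=
  cycle_iff_unfolding_general he ha ω hω hR hint η hη
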